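/- arXiv:2601.05327 — 3 statements merged into one kernel-verified Lean document; each statement's English description precedes it below -/
import Mathlib

section
/- Let $X$ be a second-countable locally compact Hausdorff space. Then the space of bounded Borel-measurable complex-valued functions on $X$ is the smallest set of functions that contains $C_0(X)$, is closed under pointwise algebra operations (sums, scalar multiples, products), and is closed under taking pointwise limits of uniformly bounded sequences. -/
open scoped ZeroAtInfty

/-- For a second-countable locally compact Hausdorff space `X`, the bounded Borel
functions `X → ℂ` form the smallest set of functions containing `C₀(X, ℂ)` that is
closed under sums, scalar multiples, products, and pointwise limits of uniformly
bounded sequences. -/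
theorem stmt2 {X : Type*} [TopologicalSpace X] [MeasurableSpace X] [BorelSpace X]
    [SecondCountableTopology X] [LocallyCompactSpace X] [T2Space X] :
    {f : X → ℂ | Measurable f ∧ ∃ C : ℝ, ∀ x, ‖f x‖ ≤ C} =
      ⋂₀ {F : Set (X → ℂ) |
        (∀ g : C₀(X, ℂ), ⇑g ∈ F) ∧
        (∀ f g : X → ℂ, f ∈ F → g ∈ F → f + g ∈ F) ∧
        (∀ (c : ℂ) (f : X → ℂ), f ∈ F → c • f ∈ F) ∧
        (∀ f g : X → ℂ, f ∈ F → g ∈ F → f * g ∈ F) ∧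
        (∀ (u : ℕ → X → ℂ) (f : X → ℂ), (∀ n, u n ∈ F) →
          (∃ C : ℝ, ∀ n x, ‖u n x‖ ≤ C) →
          (∀ x, Filter.Tendsto (fun n => u n x) Filter.atTop (nhds (f x))) → f ∈ F)} := by
  apply Set.Subset.antisymm
  · -- hard direction: every bounded measurable function is in every such `F`
    rintro f ⟨hmf, C, hC⟩ F ⟨hC₀, hadd, hsmul, hmul, hlim⟩
    clear hmul
    classical
    -- `0 ∈ F`
    have h0 : (0 : X → ℂ) ∈ F := by simpa using hC₀ 0
    -- indicators of open sets are in `F`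
    have hopen : ∀ U : Set X, IsOpen U →
        Set.indicator U (fun _ => (1 : ℂ)) ∈ F := by
      intro U hU
      rcases Set.eq_empty_or_nonempty U with rfl | hne
      · simp only [Set.indicator_empty]; exact h0
      -- choose compact neighborhoods inside `U`
      have hK : ∀ x : U, ∃ K : Set X, IsCompact K ∧ (x : X) ∈ interior K ∧ K ⊆ U :=
        fun x => exists_compact_subset hU x.2
      choose K hKc hKi hKU using hK
      -- countable subcover of the interiors
      obtain ⟨T, hTc, hTU⟩ := TopologicalSpace.isOpen_iUnion_countable
        (fun x : U => interior (K x)) (fun _ => isOpen_interior)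
      have hTne : T.Nonempty := by
        rcases hne with ⟨x, hx⟩
        by_contra h
        rw [Set.not_nonempty_iff_eq_empty] at h
        have : (x : X) ∈ ⋃ i : U, interior (K i) :=
          Set.mem_iUnion.2 ⟨⟨x, hx⟩, hKi ⟨x, hx⟩⟩
        rw [← hTU, h] at this
        simpa using this
      obtain ⟨e, hTe⟩ := Set.Countable.exists_eq_range hTc hTne
      -- compact sets `Kn n` increasing to `U`
      set Kn : ℕ → Set X := fun n => ⋃ i ∈ Finset.range (n + 1), K (e i) with hKn
      have hKnc : ∀ n, IsCompact (Kn n) := fun n =>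
        (Finset.range (n + 1)).isCompact_biUnion (fun i _ => hKc (e i))
      have hKnU : ∀ n, Kn n ⊆ U := fun n =>
        Set.iUnion₂_subset fun i _ => hKU (e i)
      have hcover : ∀ x ∈ U, ∃ m, x ∈ interior (K (e m)) := by
        intro x hx
        have : x ∈ ⋃ i : U, interior (K i) :=
          Set.mem_iUnion.2 ⟨⟨x, hx⟩, hKi ⟨x, hx⟩⟩
        rw [← hTU] at this
        obtain ⟨i, hiT, hxi⟩ := Set.mem_iUnion₂.1 this
        rw [hTe] at hiT
        obtain ⟨m, rfl⟩ := hiT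
        exact ⟨m, hxi⟩
      -- Urysohn functions
      have hg : ∀ n, ∃ g : C(X, ℝ), Set.EqOn g 1 (Kn n) ∧ Set.EqOn g 0 Uᶜ ∧
          HasCompactSupport g ∧ ∀ x, g x ∈ Set.Icc (0 : ℝ) 1 := fun n =>
        exists_continuous_one_zero_of_isCompact (hKnc n) hU.isClosed_compl
          (Set.disjoint_compl_right_iff_subset.2 (hKnU n))
      choose g hg1 hg0 hgsupp hg01 using hg
      -- the corresponding `C₀` functions
      have hgF : ∀ n, (fun x => ((g n x : ℝ) : ℂ)) ∈ F := by
        intro n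
        have hcs : HasCompactSupport (fun x => ((g n x : ℝ) : ℂ)) :=
          (hgsupp n).comp_left Complex.ofReal_zero
        exact hC₀ ⟨⟨fun x => ((g n x : ℝ) : ℂ),
          Complex.continuous_ofReal.comp (g n).continuous⟩, hcs.is_zero_at_infty⟩
      refine hlim _ _ hgF ⟨1, fun n x => ?_⟩ fun x => ?_
      · have := hg01 n x
        simp only [Complex.norm_real, Real.norm_eq_abs, abs_le]
        constructor <;> linarith [this.1, this.2]
      · by_cases hx : x ∈ U
        · obtain ⟨m, hm⟩ := hcover x hx
          rw [Set.indicator_of_mem hx]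
          apply Filter.Tendsto.congr' _ tendsto_const_nhds
          filter_upwards [Filter.eventually_ge_atTop m] with n hn
          have hxK : x ∈ Kn n :=
            Set.mem_biUnion (Finset.mem_range.2 (Nat.lt_succ_of_le hn))
              (interior_subset hm)
          rw [hg1 n hxK]
          simp
        · rw [Set.indicator_of_notMem hx]
          apply Filter.Tendsto.congr' _ tendsto_const_nhds
          filter_upwards with n
          rw [hg0 n hx]
          simp
    -- constant one is in `F`
    have h1 : (fun _ : X => (1 : ℂ)) ∈ F := by
      have := hopen Set.univ isOpen_univ
      simpa [Set.indicator_univ] using this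
    -- indicators of measurable sets are in `F`
    have hind : ∀ s : Set X, MeasurableSet s →
        Set.indicator s (fun _ => (1 : ℂ)) ∈ F := by
      intro s hs
      refine MeasurableSet.induction_on_open
        (C := fun s _ => Set.indicator s (fun _ => (1 : ℂ)) ∈ F) hopen ?_ ?_ s hs
      · intro t ht hmem
        have : Set.indicator tᶜ (fun _ => (1 : ℂ)) =
            (fun _ : X => (1 : ℂ)) + (-1 : ℂ) • Set.indicator t (fun _ => (1 : ℂ)) := by
          funext x
          by_cases hx : x ∈ t <;> simp [Set.indicator_of_mem, Set.indicator_of_notMem, hx]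
        rw [this]
        exact hadd _ _ h1 (hsmul (-1) _ hmem)
      · intro s hdisj hmeas hmem
        set u : ℕ → X → ℂ := fun n => ∑ i ∈ Finset.range n,
          Set.indicator (s i) (fun _ => (1 : ℂ)) with hu
        have huF : ∀ n, u n ∈ F := by
          intro n
          induction n with
          | zero => simpa [hu] using h0
          | succ n ih =>
            have : u (n + 1) = u n + Set.indicator (s n) (fun _ => (1 : ℂ)) := by
              simp [hu, Finset.sum_range_succ]
            rw [this]
            exact hadd _ _ ih (hmem n)
        have hval : ∀ n x, u n x =
            if ∃ j ∈ Finset.range n, x ∈ s j then (1 : ℂ) else 0 := by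
          intro n x
          simp only [hu, Finset.sum_apply]
          by_cases h : ∃ j ∈ Finset.range n, x ∈ s j
          · obtain ⟨j, hj, hxj⟩ := h
            rw [if_pos ⟨j, hj, hxj⟩,
              Finset.sum_eq_single_of_mem j hj]
            · simp [Set.indicator_of_mem hxj]
            · intro i _ hij
              have hxi : x ∉ s i := fun hxi =>
                Set.disjoint_left.1 (hdisj hij) hxi hxj
              simp [Set.indicator_of_notMem hxi]
          · rw [if_neg h]
            refine Finset.sum_eq_zero fun i hi => ?_
            have hxi : x ∉ s i := fun hxi => h ⟨i, hi, hxi⟩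
            simp [Set.indicator_of_notMem hxi]
        refine hlim u _ huF ⟨1, fun n x => ?_⟩ fun x => ?_
        · rw [hval]
          split_ifs <;> simp
        · by_cases hx : x ∈ ⋃ i, s i
          · obtain ⟨j, hj⟩ := Set.mem_iUnion.1 hx
            rw [Set.indicator_of_mem hx]
            apply Filter.Tendsto.congr' _ tendsto_const_nhds
            filter_upwards [Filter.eventually_ge_atTop (j + 1)] with n hn
            rw [hval, if_pos ⟨j, Finset.mem_range.2 (Nat.lt_of_succ_le hn), hj⟩]
          · rw [Set.indicator_of_notMem hx]
            apply Filter.Tendsto.congr' _ tendsto_const_nhds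
            filter_upwards with n
            rw [hval, if_neg]
            rintro ⟨j, -, hxj⟩
            exact hx (Set.mem_iUnion.2 ⟨j, hxj⟩)
    -- simple functions are in `F`
    have hsimple : ∀ φ : MeasureTheory.SimpleFunc X ℂ, ⇑φ ∈ F := by
      intro φ
      induction φ using MeasureTheory.SimpleFunc.induction with
      | @const c s hs =>
        have : ⇑(MeasureTheory.SimpleFunc.piecewise s hs
            (MeasureTheory.SimpleFunc.const X c) (MeasureTheory.SimpleFunc.const X 0)) =
            c • Set.indicator s (fun _ => (1 : ℂ)) := by
          funext x
          by_cases hx : x ∈ s <;>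
            simp [MeasureTheory.SimpleFunc.piecewise_apply, hx,
              Set.indicator_of_mem, Set.indicator_of_notMem]
        rw [this]
        exact hsmul c _ (hind s hs)
      | @add φ ψ _ hφ hψ =>
        rw [MeasureTheory.SimpleFunc.coe_add]
        exact hadd _ _ hφ hψ
    -- approximate `f` by simple functions with values in a closed ball
    set C' : ℝ := max C 0 with hC'
    set s : Set ℂ := Metric.closedBall 0 C' with hs
    have h0s : (0 : ℂ) ∈ s := Metric.mem_closedBall_self (le_max_right _ _)
    have hfs : ∀ x, f x ∈ s := fun x => by
      simp only [hs, Metric.mem_closedBall, dist_zero_right]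
      exact (hC x).trans (le_max_left _ _)
    refine hlim (fun n => ⇑(MeasureTheory.SimpleFunc.approxOn f hmf s 0 h0s n)) f
      (fun n => hsimple _) ⟨C', fun n x => ?_⟩ fun x => ?_
    · have := MeasureTheory.SimpleFunc.approxOn_mem hmf h0s n x
      simpa [hs, Metric.mem_closedBall, dist_zero_right] using this
    · exact MeasureTheory.SimpleFunc.tendsto_approxOn hmf h0s
        (by rw [Metric.isClosed_closedBall.closure_eq]; exact hfs x)
  · -- easy direction: bounded measurable functions form such an `F`
    intro f hf
    refine hf {f : X → ℂ | Measurable f ∧ ∃ C : ℝ, ∀ x, ‖f x‖ ≤ C}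
      ⟨fun g => ⟨g.continuous.measurable, ‖g.toBCF‖, fun x =>
        g.toBCF.norm_coe_le_norm x⟩, ?_, ?_, ?_, ?_⟩
    · rintro f g ⟨hf, Cf, hCf⟩ ⟨hg, Cg, hCg⟩
      exact ⟨hf.add hg, Cf + Cg, fun x =>
        (norm_add_le _ _).trans (add_le_add (hCf x) (hCg x))⟩
    · rintro c f ⟨hf, Cf, hCf⟩
      refine ⟨hf.const_smul c, ‖c‖ * Cf, fun x => ?_⟩
      rw [Pi.smul_apply, norm_smul]
      exact mul_le_mul_of_nonneg_left (hCf x) (norm_nonneg c)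
    · rintro f g ⟨hf, Cf, hCf⟩ ⟨hg, Cg, hCg⟩
      refine ⟨hf.mul hg, Cf * Cg, fun x => ?_⟩
      rw [Pi.mul_apply, norm_mul]
      exact mul_le_mul (hCf x) (hCg x) (norm_nonneg _)
        ((norm_nonneg _).trans (hCf x))
    · rintro u f hu ⟨C, hC⟩ htend
      refine ⟨measurable_of_tendsto_metrizable (fun n => (hu n).1)
        (tendsto_pi_nhds.mpr htend), C, fun x => ?_⟩
      exact le_of_tendsto ((htend x).norm) (Filter.Eventually.of_forall fun n => hC n x)
end

section
/- Let $X = \mathbb{N}$ and let $K$ be the set of positive measures $\omega$ on $\mathbb{N}$ with total mass at most 1 satisfying $\omega(\{n\}) \le \frac{1}{n 2^n}$ for all $n \ge 1$. Then $K$ is a weak-star closed convex subset of $\operatorname{Prob}_0(\mathbb{N})$, and the function $F(\omega) = \sum_{n\ge 1} n\,\omega(\{n\})$ is a well-defined continuous affine function on $K$ that is not of the form $\omega \mapsto c + \int_{\mathbb{N}} f\, d\omega$ for any $f \in C_0(\mathbb{N})$ and constant $c$. -/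
open MeasureTheory
open scoped ZeroAtInfty

/-- The set of positive Borel measures of total mass at most 1. -/
def Prob0 (X : Type*) [TopologicalSpace X] [MeasurableSpace X] : Type _ :=
  {μ : Measure X // μ Set.univ ≤ 1}

/-- The weak-star topology on `Prob0 X`. -/
noncomputable instance Prob0.topologicalSpace (X : Type*) [TopologicalSpace X]
    [MeasurableSpace X] : TopologicalSpace (Prob0 X) :=
  TopologicalSpace.induced
    (fun ω : Prob0 X => fun g : C₀(X, ℝ) => ∫ x, g x ∂ω.1) Pi.topologicalSpace

/-- The example set `K ⊆ Prob0 ℕ` of measures `ω` with `ω {n} ≤ 1/(n 2^n)` for `n ≥ 1`. -/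
def Kex : Set (Prob0 ℕ) :=
  {ω | ∀ n : ℕ, 1 ≤ n → ω.1 {n} ≤ ENNReal.ofReal (1 / (n * 2 ^ n))}

/-- The affine functional `F ω = ∑ n • ω {n}`. -/
noncomputable def Fex (ω : Prob0 ℕ) : ℝ := ∑' n : ℕ, (n : ℝ) * (ω.1 {n}).toReal

/-- Indicator of a singleton as an element of `C₀(ℕ, ℝ)`. -/
noncomputable def eSingle (n : ℕ) : C₀(ℕ, ℝ) where
  toFun := Set.indicator {n} 1
  continuous_toFun := continuous_of_discreteTopology
  zero_at_infty' := by
    refine tendsto_const_nhds.congr' ?_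
    have h : ∀ᶠ x in Filter.cocompact ℕ, x ∈ ({n} : Set ℕ)ᶜ :=
      isCompact_singleton.compl_mem_cocompact
    filter_upwards [h] with x hx
    exact (Set.indicator_of_notMem hx 1).symm

lemma integral_eSingle (μ : Measure ℕ) (n : ℕ) :
    ∫ x, eSingle n x ∂μ = (μ {n}).toReal := by
  have : ∀ x, eSingle n x = Set.indicator {n} 1 x := fun _ => rfl
  simp only [this]
  exact integral_indicator_one (measurableSet_singleton n)

lemma cont_coord (n : ℕ) : Continuous fun ω : Prob0 ℕ => (ω.1 {n}).toReal := by
  have h : (fun ω : Prob0 ℕ => (ω.1 {n}).toReal) =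
      (fun L : C₀(ℕ, ℝ) → ℝ => L (eSingle n)) ∘
        (fun ω : Prob0 ℕ => fun g : C₀(ℕ, ℝ) => ∫ x, g x ∂ω.1) := by
    funext ω
    simp [integral_eSingle]
  rw [h]
  exact (continuous_apply (eSingle n)).comp continuous_induced_dom

lemma meas_ne_top (ω : Prob0 ℕ) (s : Set ℕ) : ω.1 s ≠ ⊤ :=
  ((le_trans (measure_mono (Set.subset_univ s)) ω.2).trans_lt ENNReal.one_lt_top).ne

lemma cpos (n : ℕ) (hn : 1 ≤ n) : 0 < 1 / ((n : ℝ) * 2 ^ n) := by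
  have : (0 : ℝ) < n := by exact_mod_cast hn
  positivity

lemma term_bound {ω : Prob0 ℕ} (hω : ω ∈ Kex) (n : ℕ) :
    ‖(n : ℝ) * (ω.1 {n}).toReal‖ ≤ (1 / 2 : ℝ) ^ n := by
  rcases Nat.eq_zero_or_pos n with h | h
  · subst h; simp
  · have hb := hω n h
    have hc : (0 : ℝ) ≤ 1 / ((n : ℝ) * 2 ^ n) := (cpos n h).le
    have htr : (ω.1 {n}).toReal ≤ 1 / ((n : ℝ) * 2 ^ n) :=
      (ENNReal.le_ofReal_iff_toReal_le (meas_ne_top ω _) hc).mp hb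
    have h0 : (0 : ℝ) ≤ (n : ℝ) * (ω.1 {n}).toReal := by positivity
    rw [Real.norm_of_nonneg h0]
    have hn : (0 : ℝ) < n := by exact_mod_cast h
    calc (n : ℝ) * (ω.1 {n}).toReal ≤ (n : ℝ) * (1 / ((n : ℝ) * 2 ^ n)) := by
          exact mul_le_mul_of_nonneg_left htr hn.le
      _ = (1 / 2 : ℝ) ^ n := by
          field_simp
          rw [← mul_pow]; norm_num
  
lemma summable_geom : Summable fun n : ℕ => (1 / 2 : ℝ) ^ n :=
  summable_geometric_of_lt_one (by norm_num) (by norm_num)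

lemma summable_on_Kex {ω : Prob0 ℕ} (hω : ω ∈ Kex) :
    Summable fun n : ℕ => (n : ℝ) * (ω.1 {n}).toReal :=
  Summable.of_norm_bounded summable_geom (term_bound hω)

/-- `K` is a weak-star closed convex subset of `Prob0 ℕ`, and
`F ω = ∑ n ω({n})` is a well-defined continuous affine function on `K` that is not of
the form `ω ↦ c + ∫ f dω` for any `f ∈ C₀(ℕ, ℝ)` and constant `c`. -/
theorem stmt7 :
    IsClosed Kex ∧
    -- convexity of `K`
    (∀ ω₁ ∈ Kex, ∀ ω₂ ∈ Kex, ∀ t : ℝ, 0 ≤ t → t ≤ 1 → ∀ ω : Prob0 ℕ,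
      ω.1 = ENNReal.ofReal t • ω₁.1 + ENNReal.ofReal (1 - t) • ω₂.1 → ω ∈ Kex) ∧
    -- the sum defining `F` converges on `K`
    (∀ ω ∈ Kex, Summable fun n : ℕ => (n : ℝ) * (ω.1 {n}).toReal) ∧
    -- `F` is continuous on `K`
    ContinuousOn Fex Kex ∧
    -- `F` is affine on `K`
    (∀ ω₁ ∈ Kex, ∀ ω₂ ∈ Kex, ∀ t : ℝ, 0 ≤ t → t ≤ 1 → ∀ ω : Prob0 ℕ,
      ω.1 = ENNReal.ofReal t • ω₁.1 + ENNReal.ofReal (1 - t) • ω₂.1 →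
      Fex ω = t * Fex ω₁ + (1 - t) * Fex ω₂) ∧
    -- `F` is not represented by any element of `C₀(ℕ, ℝ)` plus a constant
    ¬ ∃ (f : C₀(ℕ, ℝ)) (c : ℝ), ∀ ω ∈ Kex, Fex ω = c + ∫ n, f n ∂ω.1 := by
  refine ⟨?_, ?_, ?_, ?_, ?_, ?_⟩
  · -- closed
    have : Kex = ⋂ n : ℕ,
        {ω : Prob0 ℕ | 1 ≤ n → (ω.1 {n}).toReal ≤ 1 / ((n : ℝ) * 2 ^ n)} := by
      ext ω
      simp only [Kex, Set.mem_setOf_eq, Set.mem_iInter]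
      constructor
      · intro h n hn
        exact (ENNReal.le_ofReal_iff_toReal_le (meas_ne_top ω _) (cpos n hn).le).mp (h n hn)
      · intro h n hn
        exact (ENNReal.le_ofReal_iff_toReal_le (meas_ne_top ω _) (cpos n hn).le).mpr (h n hn)
    rw [this]
    refine isClosed_iInter fun n => ?_
    rcases Nat.eq_zero_or_pos n with h | h
    · subst h
      simp
    · have he : {ω : Prob0 ℕ | 1 ≤ n → (ω.1 {n}).toReal ≤ 1 / ((n : ℝ) * 2 ^ n)} =
          {ω : Prob0 ℕ | (ω.1 {n}).toReal ≤ 1 / ((n : ℝ) * 2 ^ n)} := by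
        ext ω
        simp only [Set.mem_setOf_eq]
        exact ⟨fun hi => hi h, fun hi _ => hi⟩
      rw [he]
      exact isClosed_le (cont_coord n) continuous_const
  · -- convex
    intro ω₁ h₁ ω₂ h₂ t ht ht1 ω hω n hn
    have ht' : (0 : ℝ) ≤ 1 - t := by linarith
    rw [hω]
    simp only [Measure.add_apply, Measure.smul_apply, smul_eq_mul]
    calc ENNReal.ofReal t * ω₁.1 {n} + ENNReal.ofReal (1 - t) * ω₂.1 {n}
        ≤ ENNReal.ofReal t * ENNReal.ofReal (1 / (n * 2 ^ n)) +
          ENNReal.ofReal (1 - t) * ENNReal.ofReal (1 / (n * 2 ^ n)) := by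
          gcongr
          exacts [h₁ n hn, h₂ n hn]
      _ = (ENNReal.ofReal t + ENNReal.ofReal (1 - t)) * ENNReal.ofReal (1 / (n * 2 ^ n)) := by
          ring
      _ = ENNReal.ofReal (1 / (n * 2 ^ n)) := by
          rw [← ENNReal.ofReal_add ht ht']
          norm_num
  · -- summable
    intro ω hω
    exact summable_on_Kex hω
  · -- continuous
    have hb : ∀ (n : ℕ) (ω : Prob0 ℕ), ω ∈ Kex →
        ‖(n : ℝ) * (ω.1 {n}).toReal‖ ≤ (1 / 2 : ℝ) ^ n := fun n ω hω => term_bound hω n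
    have H := tendstoUniformlyOn_tsum summable_geom hb
    exact H.continuousOn (Filter.Eventually.frequently (Filter.Eventually.of_forall fun t =>
      (continuous_finset_sum t fun n _ => continuous_const.mul (cont_coord n)).continuousOn))
  · -- affine
    intro ω₁ h₁ ω₂ h₂ t ht ht1 ω hω
    have ht' : (0 : ℝ) ≤ 1 - t := by linarith
    have key : ∀ n : ℕ, (n : ℝ) * (ω.1 {n}).toReal =
        t * ((n : ℝ) * (ω₁.1 {n}).toReal) + (1 - t) * ((n : ℝ) * (ω₂.1 {n}).toReal) := by
      intro n
      rw [hω]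
      simp only [Measure.add_apply, Measure.smul_apply, smul_eq_mul]
      rw [ENNReal.toReal_add (ENNReal.mul_ne_top ENNReal.ofReal_ne_top (meas_ne_top ω₁ _))
        (ENNReal.mul_ne_top ENNReal.ofReal_ne_top (meas_ne_top ω₂ _)),
        ENNReal.toReal_mul, ENNReal.toReal_mul, ENNReal.toReal_ofReal ht,
        ENNReal.toReal_ofReal ht']
      ring
    unfold Fex
    rw [tsum_congr key, Summable.tsum_add ((summable_on_Kex h₁).mul_left t)
      ((summable_on_Kex h₂).mul_left (1 - t)), tsum_mul_left, tsum_mul_left]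
  · -- not representable
    rintro ⟨f, c, hfc⟩
    -- the zero measure
    have hz : ((0 : Measure ℕ) Set.univ) ≤ 1 := by simp
    have h0K : (⟨0, hz⟩ : Prob0 ℕ) ∈ Kex := fun n _ => by simp
    have h0 := hfc _ h0K
    have hF0 : Fex ⟨0, hz⟩ = 0 := by
      unfold Fex
      simp
    rw [hF0] at h0
    simp only [integral_zero_measure] at h0
    have hc0 : c = 0 := by linarith
    -- dirac measures
    have hf : ∀ n : ℕ, 1 ≤ n → f n = n := by
      intro n hn
      set cn : ℝ := 1 / ((n : ℝ) * 2 ^ n) with hcn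
      have hcpos := cpos n hn
      have hcle : cn ≤ 1 := by
        rw [hcn]
        rw [div_le_one (by positivity)]
        have h1 : (1 : ℝ) ≤ (n : ℝ) := by exact_mod_cast hn
        have h2 : (1 : ℝ) ≤ 2 ^ n := by
          have := Nat.one_le_two_pow (n := n); exact_mod_cast this
        nlinarith
      set μn : Measure ℕ := ENNReal.ofReal cn • Measure.dirac n with hμn
      have hmass : μn Set.univ ≤ 1 := by
        rw [hμn]
        simp only [Measure.smul_apply, smul_eq_mul, measure_univ, mul_one]
        exact ENNReal.ofReal_le_one.mpr hcle
      have hdirac : ∀ m : ℕ, μn {m} = ENNReal.ofReal cn * (Measure.dirac n) {m} := by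
        intro m; rw [hμn]; simp [Measure.smul_apply]
      have hmem : (⟨μn, hmass⟩ : Prob0 ℕ) ∈ Kex := by
        intro m hm
        rw [hdirac m, Measure.dirac_apply]
        by_cases hnm : n = m
        · subst hnm
          rw [Set.indicator_of_mem (Set.mem_singleton n), Pi.one_apply, mul_one]
        · rw [Set.indicator_of_notMem (by simpa using hnm), mul_zero]
          exact zero_le
      have heq := hfc _ hmem
      have hFn : Fex ⟨μn, hmass⟩ = n * cn := by
        unfold Fex
        rw [tsum_eq_single n]
        · rw [hdirac n, Measure.dirac_apply, Set.indicator_of_mem (Set.mem_singleton n),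
            Pi.one_apply, mul_one, ENNReal.toReal_ofReal hcpos.le]
        · intro m hm
          rw [hdirac m, Measure.dirac_apply,
            Set.indicator_of_notMem (by simpa using (Ne.symm hm)), mul_zero]
          simp
      have hInt : ∫ x, f x ∂μn = cn * f n := by
        rw [hμn, integral_smul_measure, integral_dirac, ENNReal.toReal_ofReal hcpos.le,
          smul_eq_mul]
      rw [hFn, hc0, hInt] at heq
      have : cn * f n = cn * n := by linarith [heq]
      exact mul_left_cancel₀ hcpos.ne' this
    -- contradiction with zero at infinity
    have htend : Filter.Tendsto (fun n : ℕ => f n) Filter.atTop (nhds 0) := by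
      have h := ZeroAtInftyContinuousMapClass.zero_at_infty f
      rwa [Filter.cocompact_eq_cofinite, Nat.cofinite_eq_atTop] at h
    have hlt := htend.eventually_lt_const (by norm_num : (0 : ℝ) < 1)
    obtain ⟨n, hn1, hn2⟩ := ((Filter.eventually_ge_atTop 1).and hlt).exists
    rw [hf n hn1] at hn2
    have : (1 : ℝ) ≤ n := by exact_mod_cast hn1
    linarith
end

section
/- Let $X$ be a second-countable locally compact Hausdorff space, $G$ a group acting on $X$ by homeomorphisms, and $\mathsf{m}$ a $G$-invariant Borel probability measure on $X$. Suppose $\rho$ is a Borel probability measure on the set $\operatorname{Erg}(X) \cup \{0\}$ of extreme points of $\operatorname{Prob}_0^G(X)$ representing $\mathsf{m}$ as barycentre. Then $\rho(\{0\}) = 0$, i.e. $\rho$ is supported in $\operatorname{Erg}(X)$. -/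
open MeasureTheory
open scoped ZeroAtInfty

/-- The Borel sigma-algebra of the weak-star topology. -/
noncomputable instance Prob0.measurableSpace (X : Type*) [TopologicalSpace X] [MeasurableSpace X] :
    MeasurableSpace (Prob0 X) := borel _

/-- The set of ergodic `G`-invariant probability measures in `Prob0 X`. -/
def ErgSet (X : Type*) [TopologicalSpace X] [MeasurableSpace X]
    (G : Type*) [Group G] [MulAction G X] : Set (Prob0 X) :=
  {ω | ω.1 Set.univ = 1 ∧ (∀ g : G, Measure.map (fun x : X => g • x) ω.1 = ω.1) ∧
    ∀ s : Set X, MeasurableSet s → (∀ g : G, (fun x : X => g • x) ⁻¹' s = s) →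
      ω.1 s = 0 ∨ ω.1 sᶜ = 0}

instance Prob0.borelSpace (X : Type*) [TopologicalSpace X] [MeasurableSpace X] :
    BorelSpace (Prob0 X) := ⟨rfl⟩

/-- Evaluation against a fixed `C₀` function is continuous on `Prob0 X`. -/
theorem Prob0.continuous_eval {X : Type*} [TopologicalSpace X] [MeasurableSpace X]
    (g : C₀(X, ℝ)) : Continuous fun ω : Prob0 X => ∫ x, g x ∂ω.1 := by
  apply Continuous.comp (continuous_apply g)
  exact continuous_induced_dom

/-- If a probability measure `ρ` supported in `Erg(X) ∪ {0}` (the extreme points of the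
set of invariant sub-probability measures) represents a `G`-invariant probability
measure `m` as a barycentre, then `ρ` gives the zero measure mass zero, i.e. `ρ` is
supported in `Erg(X)`. -/
theorem stmt9 {X : Type*} [TopologicalSpace X] [MeasurableSpace X] [BorelSpace X]
    [SecondCountableTopology X] [LocallyCompactSpace X] [T2Space X]
    (G : Type*) [Group G] [MulAction G X]
    (hcont : ∀ g : G, Continuous fun x : X => g • x)
    (m : Measure X) (hmprob : IsProbabilityMeasure m)
    (hminv : ∀ g : G, Measure.map (fun x : X => g • x) m = m)
    (ρ : Measure (Prob0 X)) (hρ : IsProbabilityMeasure ρ)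
    (hρsupp : ρ (ErgSet X G ∪ {ω : Prob0 X | ω.1 = 0})ᶜ = 0)
    (hbary : ∀ g : C₀(X, ℝ),
      ∫ x, g x ∂m = ∫ ω : Prob0 X, (∫ x, g x ∂ω.1) ∂ρ) :
    ρ {ω : Prob0 X | ω.1 = 0} = 0 := by
  set S : Set (Prob0 X) := {ω : Prob0 X | ω.1 = 0} with hSdef
  have hfin : ∀ ω : Prob0 X, IsFiniteMeasure ω.1 := fun ω =>
    ⟨lt_of_le_of_lt ω.2 ENNReal.one_lt_top⟩
  obtain ⟨K⟩ : Nonempty (CompactExhaustion X) := ⟨CompactExhaustion.choice X⟩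
  -- bump functions dominating the compact exhaustion
  have hbump : ∀ n : ℕ, ∃ f : C(X, ℝ), Set.EqOn f 1 (K n) ∧ HasCompactSupport f ∧
      ∀ x, f x ∈ Set.Icc (0:ℝ) 1 := by
    intro n
    obtain ⟨f, h1, _, h3, h4⟩ := exists_continuous_one_zero_of_isCompact (K.isCompact n)
      isClosed_empty disjoint_bot_right
    exact ⟨f, h1, h3, h4⟩
  choose f hf1 hf2 hf3 using hbump
  set g : ℕ → C₀(X, ℝ) := fun n => ⟨f n, (hf2 n).is_zero_at_infty⟩ with hgdef
  have hgcoe : ∀ n, (g n : X → ℝ) = f n := fun n => rfl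
  -- integrability and basic bounds
  have hint : ∀ (n : ℕ) (μ : Measure X), IsFiniteMeasure μ → Integrable (f n) μ := by
    intro n μ _
    exact (f n).continuous.integrable_of_hasCompactSupport (hf2 n)
  have hKle : ∀ (n : ℕ) (μ : Measure X), IsFiniteMeasure μ →
      (μ (K n)).toReal ≤ ∫ x, f n x ∂μ := by
    intro n μ hμ
    have hmeas : MeasurableSet (K n : Set X) := (K.isCompact n).isClosed.measurableSet
    have h : ∫ x, (K n : Set X).indicator (fun _ => (1:ℝ)) x ∂μ ≤ ∫ x, f n x ∂μ := by
      apply integral_mono ((integrable_const (1:ℝ)).indicator hmeas) (hint n μ hμ)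
      intro x
      by_cases hx : x ∈ (K n : Set X)
      · simpa [Set.indicator_of_mem hx] using (hf1 n hx).symm.le
      · simpa [Set.indicator_of_notMem hx] using (hf3 n x).1
    rwa [integral_indicator_const (1:ℝ) hmeas, smul_eq_mul, mul_one] at h
  have hub : ∀ (n : ℕ) (ω : Prob0 X), ∫ x, f n x ∂ω.1 ≤ 1 := by
    intro n ω
    haveI := hfin ω
    calc ∫ x, f n x ∂ω.1 ≤ ∫ _x, (1:ℝ) ∂ω.1 :=
          integral_mono (hint n ω.1 (hfin ω)) (integrable_const 1) (fun x => (hf3 n x).2)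
      _ = (ω.1 Set.univ).toReal := by simp [Measure.real]
      _ ≤ 1 := by
          rw [← ENNReal.toReal_one]
          exact ENNReal.toReal_mono ENNReal.one_ne_top ω.2
  have hlb : ∀ (n : ℕ) (ω : Prob0 X), 0 ≤ ∫ x, f n x ∂ω.1 := fun n ω =>
    integral_nonneg fun x => (hf3 n x).1
  -- S is the intersection of the zero sets of the evaluations at the bump functions
  have hSeq : S = ⋂ n, (fun ω : Prob0 X => ∫ x, f n x ∂ω.1) ⁻¹' {0} := by
    ext ω
    simp only [Set.mem_iInter, Set.mem_setOf_eq, Set.mem_preimage, Set.mem_singleton_iff, hSdef]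
    constructor
    · intro h n; rw [h]; exact integral_zero_measure _
    · intro h
      haveI := hfin ω
      have hK0 : ∀ n, ω.1 (K n) = 0 := by
        intro n
        have hle := hKle n ω.1 (hfin ω)
        rw [h n] at hle
        have h2 : (ω.1 (K n)).toReal = 0 := le_antisymm hle ENNReal.toReal_nonneg
        exact ((ENNReal.toReal_eq_zero_iff _).1 h2).resolve_right (measure_ne_top _ _)
      have huniv : ω.1 Set.univ = 0 := by
        have h2 : ω.1 (⋃ n, (K n : Set X)) = 0 := measure_iUnion_null hK0
        rwa [K.iUnion_eq] at h2
      exact Measure.measure_univ_eq_zero.1 huniv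
  have hSmeas : MeasurableSet S := by
    rw [hSeq]
    refine MeasurableSet.iInter fun n => ?_
    have hc : Continuous fun ω : Prob0 X => ∫ x, f n x ∂ω.1 := by
      have := Prob0.continuous_eval (g n)
      simpa [hgcoe] using this
    exact (isClosed_singleton.preimage hc).measurableSet
  -- main estimate
  have hmain : ∀ n : ℕ, (m (K n)).toReal ≤ (ρ Sᶜ).toReal := by
    intro n
    have h1 : (m (K n)).toReal ≤ ∫ x, f n x ∂m := hKle n m inferInstance
    have h2 : ∫ x, f n x ∂m = ∫ ω : Prob0 X, (∫ x, f n x ∂ω.1) ∂ρ := hbary (g n)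
    have hc : Continuous fun ω : Prob0 X => ∫ x, f n x ∂ω.1 := by
      have := Prob0.continuous_eval (g n)
      simpa [hgcoe] using this
    have hFint : Integrable (fun ω : Prob0 X => ∫ x, f n x ∂ω.1) ρ := by
      apply (integrable_const (1:ℝ)).mono' hc.measurable.aestronglyMeasurable
      filter_upwards with ω
      rw [Real.norm_eq_abs, abs_le]
      exact ⟨by linarith [hlb n ω], hub n ω⟩
    have h3 : ∫ ω : Prob0 X, (∫ x, f n x ∂ω.1) ∂ρ ≤
        ∫ ω, Sᶜ.indicator (fun _ => (1:ℝ)) ω ∂ρ := by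
      apply integral_mono hFint ((integrable_const (1:ℝ)).indicator hSmeas.compl)
      intro ω
      by_cases hω : ω ∈ S
      · have hz : ω.1 = 0 := hω
        rw [Set.indicator_of_notMem (by simp [hω])]
        simp [hz]
      · rw [Set.indicator_of_mem (Set.mem_compl hω)]
        exact hub n ω
    rw [integral_indicator_const (1:ℝ) hSmeas.compl, smul_eq_mul, mul_one] at h3
    calc (m (K n)).toReal ≤ ∫ x, f n x ∂m := h1
      _ = _ := h2
      _ ≤ (ρ Sᶜ).toReal := h3
  -- take n → ∞
  have hlim : Filter.Tendsto (fun n => (m (K n)).toReal) Filter.atTop (nhds 1) := by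
    have h1 : Filter.Tendsto (fun n => m (K n)) Filter.atTop (nhds (m (⋃ n, K n))) :=
      tendsto_measure_iUnion_atTop K.subset
    rw [K.iUnion_eq, hmprob.measure_univ] at h1
    have h2 := (ENNReal.tendsto_toReal ENNReal.one_ne_top).comp h1
    exact h2
  have hle1 : (1:ℝ) ≤ (ρ Sᶜ).toReal :=
    le_of_tendsto hlim (Filter.Eventually.of_forall hmain)
  have hcompl : ρ Sᶜ = 1 - ρ S := prob_compl_eq_one_sub hSmeas
  have hρS1 : ρ S ≤ 1 := prob_le_one
  have htr : (ρ Sᶜ).toReal = 1 - (ρ S).toReal := by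
    rw [hcompl, ENNReal.toReal_sub_of_le hρS1 ENNReal.one_ne_top, ENNReal.toReal_one]
  have h0 : (ρ S).toReal ≤ 0 := by
    rw [htr] at hle1; linarith
  have h0' : (ρ S).toReal = 0 := le_antisymm h0 ENNReal.toReal_nonneg
  exact ((ENNReal.toReal_eq_zero_iff _).1 h0').resolve_right (measure_ne_top _ _)
end
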